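/- Under the hypotheses of the BGK H-theorem (f almost everywhere positive, integrable with finite second moment, n > 0, T > 0, and the required integrability of f·log f, f·log M, M·log f, M·log M, where M = M[f]), the entropy dissipation vanishes, ∫_{ℝ^D} (M(v) − f(v)) · log f(v) dv = 0, if and only if f = M[f] almost everywhere; that is, equality in the H-theorem holds exactly for Maxwellian equilibrium states. -/

import Mathlib

open MeasureTheory

/-- The Maxwellian distribution with number density `n`, mean velocity `vb`,
temperature `T` and particle mass `m` on `ℝ^D`. -/
noncomputable def maxwellian (D : ℕ) (m n T : ℝ) (vb : EuclideanSpace ℝ (Fin D))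
    (v : EuclideanSpace ℝ (Fin D)) : ℝ :=
  n * (m / (2 * Real.pi * T)) ^ ((D : ℝ) / 2) * Real.exp (-(m * ‖v - vb‖ ^ 2) / (2 * T))

/-!
Since `log M[f] = log C - (m / 2T) ‖v - v̄‖²` is an affine function of `‖v - v̄‖²`, and `f` and
`M[f]` have the same number density and temperature, `∫ (M[f] - f) log M[f] = 0`. Hence the
dissipation equals `∫ (M[f] - f) (log f - log M[f])`, whose integrand is nonpositive and vanishes
only where `f = M[f]`, because `log` is strictly increasing.

The second moment of the Maxwellian comes from polar coordinates: on the radial integrals,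
`∫ ‖x‖² e^{-b‖x‖²} = (d / 2b) ∫ e^{-b‖x‖²}` is the Gamma-function identity `Γ(s + 1) = s Γ(s)`.
-/

open Real Set

theorem integral_Ioi_pow_mul_sq_mul_exp_neg_mul_sq (k : ℕ) {b : ℝ} (hb : 0 < b) :
    ∫ y in Ioi (0 : ℝ), y ^ k * (y ^ 2 * exp (-b * y ^ 2)) =
      (k + 1) / (2 * b) * ∫ y in Ioi (0 : ℝ), y ^ k * exp (-b * y ^ 2) := by
  have gamma (j : ℕ) := integral_rpow_mul_exp_neg_mul_rpow two_pos
    (by linarith [j.cast_nonneg (α := ℝ)] : -1 < (j : ℝ)) hb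
  simp only [rpow_two, rpow_natCast] at gamma
  simp_rw [← mul_assoc, ← pow_add, gamma, Nat.cast_add, Nat.cast_ofNat]
  rw [show -((k : ℝ) + 2 + 1) / 2 = -(k + 1) / 2 - 1 by ring, rpow_sub_one hb.ne',
    show ((k : ℝ) + 2 + 1) / 2 = (k + 1) / 2 + 1 by ring, Gamma_add_one (by positivity)]
  field_simp

theorem integral_sq_norm_mul_exp_neg_mul_sq_norm {E : Type*} [NormedAddCommGroup E]
    [NormedSpace ℝ E] [FiniteDimensional ℝ E] [MeasurableSpace E] [BorelSpace E]
    (μ : Measure E) [μ.IsAddHaarMeasure] {b : ℝ} (hb : 0 < b) :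
    ∫ x, ‖x‖ ^ 2 * exp (-b * ‖x‖ ^ 2) ∂μ =
      Module.finrank ℝ E / (2 * b) * ∫ x, exp (-b * ‖x‖ ^ 2) ∂μ := by
  rcases subsingleton_or_nontrivial E with hE | hE
  · simp [Subsingleton.elim _ (0 : E), Module.finrank_zero_of_subsingleton]
  rw [integral_fun_norm_addHaar μ fun y => y ^ 2 * exp (-b * y ^ 2),
    integral_fun_norm_addHaar μ fun y => exp (-b * y ^ 2)]
  simp only [smul_eq_mul, nsmul_eq_mul]
  rw [integral_Ioi_pow_mul_sq_mul_exp_neg_mul_sq _ hb,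
    Nat.cast_pred Module.finrank_pos, sub_add_cancel]
  ring

theorem sub_mul_log_sub_log_neg {a b : ℝ} (ha : 0 < a) (hb : 0 < b) (hab : a ≠ b) :
    (b - a) * (log a - log b) < 0 := by
  rcases hab.lt_or_gt with h | h
  · exact mul_neg_of_pos_of_neg (sub_pos.2 h) (sub_neg.2 (log_lt_log ha h))
  · exact mul_neg_of_neg_of_pos (sub_neg.2 h) (sub_pos.2 (log_lt_log hb h))

theorem integral_sub_mul_log_eq_zero_iff {α : Type*} [MeasurableSpace α] {μ : Measure α}
    {f g : α → ℝ} (hf : ∀ᵐ x ∂μ, 0 < f x) (hg : ∀ᵐ x ∂μ, 0 < g x)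
    (hf_int : Integrable (fun x => (g x - f x) * log (f x)) μ)
    (hg_int : Integrable (fun x => (g x - f x) * log (g x)) μ)
    (hg_zero : ∫ x, (g x - f x) * log (g x) ∂μ = 0) :
    ∫ x, (g x - f x) * log (f x) ∂μ = 0 ↔ f =ᵐ[μ] g := by
  have hdiff : ∫ x, (g x - f x) * log (f x) ∂μ =
      -∫ x, -((g x - f x) * (log (f x) - log (g x))) ∂μ := by
    simp_rw [integral_neg, neg_neg, mul_sub]
    rw [integral_sub hf_int hg_int, hg_zero, sub_zero]
  have hnonneg : 0 ≤ᵐ[μ] fun x => -((g x - f x) * (log (f x) - log (g x))) := by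
    filter_upwards [hf, hg] with x hfx hgx
    rcases eq_or_ne (f x) (g x) with h | h
    · simp [h]
    · exact (neg_pos.2 (sub_mul_log_sub_log_neg hfx hgx h)).le
  rw [hdiff, neg_eq_zero, integral_eq_zero_iff_of_nonneg_ae hnonneg
    (by simpa only [mul_sub, Pi.sub_def, Pi.neg_def] using (hf_int.sub hg_int).neg)]
  constructor
  · intro h
    filter_upwards [h, hf, hg] with x hx hfx hgx
    by_contra hne
    have hneg := sub_mul_log_sub_log_neg hfx hgx hne
    simp only [Pi.zero_apply, neg_eq_zero] at hx
    linarith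
  · intro h
    filter_upwards [h] with x hx
    simp [hx]

section Maxwellian

variable {D : ℕ} {m n T : ℝ} {vb : EuclideanSpace ℝ (Fin D)}

theorem maxwellian_eq_mul_exp (v : EuclideanSpace ℝ (Fin D)) :
    maxwellian D m n T vb v =
      n * (m / (2 * π * T)) ^ ((D : ℝ) / 2) * exp (-(m / (2 * T)) * ‖v - vb‖ ^ 2) := by
  rw [maxwellian, neg_mul, div_mul_eq_mul_div, neg_div]

theorem maxwellian_pos (hn : 0 < n) (hm : 0 < m) (hT : 0 < T) (v : EuclideanSpace ℝ (Fin D)) :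
    0 < maxwellian D m n T vb v := by
  unfold maxwellian; positivity

theorem log_maxwellian (hn : 0 < n) (hm : 0 < m) (hT : 0 < T) (v : EuclideanSpace ℝ (Fin D)) :
    log (maxwellian D m n T vb v) =
      log (n * (m / (2 * π * T)) ^ ((D : ℝ) / 2)) - m / (2 * T) * ‖v - vb‖ ^ 2 := by
  rw [maxwellian_eq_mul_exp, log_mul (by positivity) (exp_pos _).ne', log_exp, neg_mul,
    ← sub_eq_add_neg]

theorem integral_maxwellian (hm : 0 < m) (hT : 0 < T) :
    ∫ v, maxwellian D m n T vb v = n := by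
  simp_rw [maxwellian_eq_mul_exp]
  rw [integral_const_mul, integral_sub_right_eq_self (fun w => exp (-(m / (2 * T)) * ‖w‖ ^ 2)) vb,
    GaussianFourier.integral_rexp_neg_mul_sq_norm (by positivity), finrank_euclideanSpace_fin,
    mul_assoc, ← mul_rpow (by positivity) (by positivity)]
  rw [show m / (2 * π * T) * (π / (m / (2 * T))) = 1 by field_simp, one_rpow, mul_one]

theorem integral_sq_norm_sub_mul_maxwellian (hm : 0 < m) (hT : 0 < T) :
    ∫ v, ‖v - vb‖ ^ 2 * maxwellian D m n T vb v = D * n * T / m := by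
  calc ∫ v, ‖v - vb‖ ^ 2 * maxwellian D m n T vb v
      = D / (2 * (m / (2 * T))) * ∫ v, maxwellian D m n T vb v := by
        simp_rw [maxwellian_eq_mul_exp, mul_left_comm _ (n * _), integral_const_mul]
        rw [integral_sub_right_eq_self (fun w => ‖w‖ ^ 2 * exp (-(m / (2 * T)) * ‖w‖ ^ 2)) vb,
          integral_sub_right_eq_self (fun w => exp (-(m / (2 * T)) * ‖w‖ ^ 2)) vb,
          integral_sq_norm_mul_exp_neg_mul_sq_norm _ (by positivity), finrank_euclideanSpace_fin]
        ring
    _ = D * n * T / m := by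
        rw [integral_maxwellian hm hT]
        field_simp

theorem integral_mul_log_maxwellian (hn : 0 < n) (hm : 0 < m) (hT : 0 < T)
    {g : EuclideanSpace ℝ (Fin D) → ℝ} (hg : Integrable g)
    (hgM : Integrable fun v => g v * log (maxwellian D m n T vb v)) :
    ∫ v, g v * log (maxwellian D m n T vb v) =
      log (n * (m / (2 * π * T)) ^ ((D : ℝ) / 2)) * (∫ v, g v) -
        m / (2 * T) * ∫ v, ‖v - vb‖ ^ 2 * g v := by
  have hsplit : ∀ v, m / (2 * T) * (‖v - vb‖ ^ 2 * g v) =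
      log (n * (m / (2 * π * T)) ^ ((D : ℝ) / 2)) * g v - g v * log (maxwellian D m n T vb v) := by
    intro v; rw [log_maxwellian hn hm hT]; ring
  rw [← integral_const_mul (m / (2 * T)), funext hsplit, integral_sub (hg.const_mul _) hgM,
    integral_const_mul]
  ring

end Maxwellian

theorem bgk_entropy_dissipation_eq_zero_iff_general
    (D : ℕ) (m : ℝ) (hm : 0 < m)
    (f : EuclideanSpace ℝ (Fin D) → ℝ)
    (hf_pos : ∀ᵐ v, 0 < f v)
    (hf_int : Integrable f)
    (n : ℝ) (hn_def : n = ∫ v, f v) (hn : 0 < n)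
    (vb : EuclideanSpace ℝ (Fin D))
    (T : ℝ) (hT : 0 < T)
    (hT_def : (D : ℝ) / 2 * n * T = ∫ v, m / 2 * ‖v - vb‖ ^ 2 * f v)
    (hflogf : Integrable (fun v => f v * Real.log (f v)))
    (hflogM : Integrable (fun v => f v * Real.log (maxwellian D m n T vb v)))
    (hMlogf : Integrable (fun v => maxwellian D m n T vb v * Real.log (f v)))
    (hMlogM : Integrable (fun v =>
      maxwellian D m n T vb v * Real.log (maxwellian D m n T vb v))) :
    (∫ v, (maxwellian D m n T vb v - f v) * Real.log (f v)) = 0 ↔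
      f =ᵐ[volume] maxwellian D m n T vb := by
  have hM_int : Integrable (maxwellian D m n T vb) :=
    .of_integral_ne_zero (by rw [integral_maxwellian hm hT]; exact hn.ne')
  have hsecond : ∫ v, ‖v - vb‖ ^ 2 * f v = ∫ v, ‖v - vb‖ ^ 2 * maxwellian D m n T vb v := by
    simp_rw [mul_assoc, integral_const_mul] at hT_def
    rw [integral_sq_norm_sub_mul_maxwellian hm hT]
    field_simp
    linarith
  have hcross : ∫ v, (maxwellian D m n T vb v - f v) * log (maxwellian D m n T vb v) = 0 := by
    simp_rw [sub_mul]
    rw [integral_sub hMlogM hflogM, integral_mul_log_maxwellian hn hm hT hM_int hMlogM,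
      integral_mul_log_maxwellian hn hm hT hf_int hflogM, integral_maxwellian hm hT, ← hn_def,
      hsecond, sub_self]
  exact integral_sub_mul_log_eq_zero_iff hf_pos (.of_forall (maxwellian_pos hn hm hT))
    (by simpa only [sub_mul, Pi.sub_def] using hMlogf.sub hflogf)
    (by simpa only [sub_mul, Pi.sub_def] using hMlogM.sub hflogM) hcross

/-- Equality in the H-theorem for the BGK operator: the entropy dissipation
`∫ (M[f] − f) log f` vanishes if and only if `f = M[f]` almost everywhere,
where `M[f]` is the Maxwellian with the same number density, mean velocity and
temperature as `f`. -/
theorem bgk_entropy_dissipation_eq_zero_iff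
    (D : ℕ) (hD : 1 ≤ D) (m : ℝ) (hm : 0 < m)
    (f : EuclideanSpace ℝ (Fin D) → ℝ)
    (hf_pos : ∀ᵐ v, 0 < f v)
    (hf_int : Integrable f)
    (hf_mom : Integrable (fun v => f v • v))
    (hf_en : Integrable (fun v => ‖v‖ ^ 2 * f v))
    (n : ℝ) (hn_def : n = ∫ v, f v) (hn : 0 < n)
    (vb : EuclideanSpace ℝ (Fin D)) (hvb : n • vb = ∫ v, f v • v)
    (T : ℝ) (hT : 0 < T)
    (hT_def : (D : ℝ) / 2 * n * T = ∫ v, m / 2 * ‖v - vb‖ ^ 2 * f v)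
    (hflogf : Integrable (fun v => f v * Real.log (f v)))
    (hflogM : Integrable (fun v => f v * Real.log (maxwellian D m n T vb v)))
    (hMlogf : Integrable (fun v => maxwellian D m n T vb v * Real.log (f v)))
    (hMlogM : Integrable (fun v =>
      maxwellian D m n T vb v * Real.log (maxwellian D m n T vb v))) :
    (∫ v, (maxwellian D m n T vb v - f v) * Real.log (f v)) = 0 ↔
      f =ᵐ[volume] maxwellian D m n T vb :=
  bgk_entropy_dissipation_eq_zero_iff_general D m hm f hf_pos hf_int n hn_def hn vb T hT hT_def
    hflogf hflogM hMlogf hMlogM
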